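/- Let A be an evolution algebra over a field K with natural basis B = (e_i)_{i∈Λ}, and let σ, τ be bijections of Λ with L_τ nonempty. Then {f ∘ g : f ∈ L_σ, g ∈ L_τ} = L_{σ∘τ}. -/

import Mathlib

/-- For a bijection `σ` of `Λ`, `Lset e σ` is the set of `K`-algebra automorphisms `f`
of `A` (realized as `K`-linear automorphisms preserving the multiplication) such that
`f (e i) = x i • e (σ i)` with `x i ∈ Kˣ` for every `i`. -/
def Lset {K A Λ : Type*} [Field K] [NonUnitalNonAssocCommRing A] [Module K A]
    [SMulCommClass K A A] [IsScalarTower K A A] (e : Module.Basis Λ K A) (σ : Equiv.Perm Λ) :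
    Set (A ≃ₗ[K] A) :=
  {f | (∀ x y : A, f (x * y) = f x * f y) ∧ ∀ i, ∃ x : Kˣ, f (e i) = (x : K) • e (σ i)}

/-- Let `A` be an evolution algebra over `K` with natural basis `(e_i)_{i∈Λ}`, and let
`σ, τ` be bijections of `Λ` with `L_τ` nonempty.  Then
`{f ∘ g : f ∈ L_σ, g ∈ L_τ} = L_{σ∘τ}`.  (Here `f * g` denotes composition `f ∘ g` in
the automorphism group of the module `A`.) -/
theorem stmt12 {K A Λ : Type*} [Field K] [NonUnitalNonAssocCommRing A] [Module K A]
    [SMulCommClass K A A] [IsScalarTower K A A]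
    (e : Module.Basis Λ K A) (hnat : ∀ i j, i ≠ j → e i * e j = 0)
    (σ τ : Equiv.Perm Λ) (hτ : (Lset e τ).Nonempty) :
    {h : A ≃ₗ[K] A | ∃ f ∈ Lset e σ, ∃ g ∈ Lset e τ, h = f * g} = Lset e (σ * τ) := by
  have hmul : ∀ (f g : A ≃ₗ[K] A) (x : A), (f * g) x = f (g x) := fun _ _ _ => rfl
  have hinvd : ∀ f : A ≃ₗ[K] A, (f⁻¹ : A ≃ₗ[K] A) = f.symm := fun _ => rfl
  obtain ⟨g₀, hg₀m, hg₀e⟩ := hτ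
  ext h
  simp only [Set.mem_setOf_eq]
  constructor
  · rintro ⟨f, ⟨hfm, hf⟩, g, ⟨hgm, hg⟩, rfl⟩
    refine ⟨fun x y => by simp [hmul, hgm, hfm], fun i => ?_⟩
    obtain ⟨y, hy⟩ := hg i
    obtain ⟨x, hx⟩ := hf (τ i)
    refine ⟨y * x, ?_⟩
    simp [hmul, hy, map_smul, hx, mul_smul, Equiv.Perm.mul_apply]
  · rintro ⟨hhm, hh⟩
    have hinv : ∀ x y : A, (g₀⁻¹ : A ≃ₗ[K] A) (x * y) =
        (g₀⁻¹ : A ≃ₗ[K] A) x * (g₀⁻¹ : A ≃ₗ[K] A) y := by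
      intro x y
      apply g₀.injective
      rw [hg₀m]
      simp [hinvd, LinearEquiv.apply_symm_apply]
    refine ⟨h * g₀⁻¹, ⟨fun x y => by
      simp only [hmul, hinv, hhm], fun j => ?_⟩,
      g₀, ⟨hg₀m, hg₀e⟩, (inv_mul_cancel_right h g₀).symm⟩
    obtain ⟨y, hy⟩ := hg₀e (τ⁻¹ j)
    obtain ⟨z, hz⟩ := hh (τ⁻¹ j)
    have h1 : (g₀⁻¹ : A ≃ₗ[K] A) (e j) = (y⁻¹ : K) • e (τ⁻¹ j) := by
      apply g₀.injective
      have : g₀ (e (τ⁻¹ j)) = (y : K) • e j := by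
        simpa using hy
      rw [Equiv.Perm.inv_def] at this
      simp [hinvd, map_smul, this, smul_smul]
    refine ⟨y⁻¹ * z, ?_⟩
    have hστ : (σ * τ) (τ⁻¹ j) = σ j := by simp [Equiv.Perm.mul_apply]
    rw [Equiv.Perm.inv_def] at h1 hz hστ
    simp [hmul, h1, map_smul, hz, hστ, mul_smul]
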